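/- Let U₁, …, U_k be the density-based decomposition of a set V' in a matroid M' of rank k (U_j is the densest subset of largest cardinality in M'/(U₁ ∪ … ∪ U_{j−1})). Then the densities are non-increasing: for all 1 ≤ j ≤ k−1, ρ_{M'/(U₁∪…∪U_{j−1})}(U_j) ≥ ρ_{M'/(U₁∪…∪U_j)}(U_{j+1}); moreover if ρ_{M'/(U₁∪…∪U_{j−1})}(U_j) > 0 then the inequality is strict. -/

import Mathlib

open Matroid Set ENNReal

namespace MatroidDCS

variable {α : Type*}

/-- The rank of a set in a matroid: supremum of sizes of independent subsets. -/
noncomputable def er (M : Matroid α) (X : Set α) : ℕ∞ :=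
  ⨆ I ∈ {I : Set α | M.Indep I ∧ I ⊆ X}, I.encard

/-- Contraction of a matroid by a set, defined via the dual. -/
noncomputable def contract (M : Matroid α) (C : Set α) : Matroid α := (M✶ ↾ (M.E \ C))✶

/-- A matroid has no loops: every singleton of the ground set is independent. -/
def Loopless (M : Matroid α) : Prop := ∀ v ∈ M.E, M.Indep {v}

/-- Density of a set in a matroid, valued in `ℝ≥0∞` (so `∅` has density 0 and a
nonempty set of rank 0 has density `⊤`). -/
noncomputable def dens (M : Matroid α) (U : Set α) : ℝ≥0∞ :=
  (U.encard : ℝ≥0∞) / (er M U : ℝ≥0∞)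

/-- Union of the first `j` pieces of a decomposition. -/
def pre (U : ℕ → Set α) (j : ℕ) : Set α := ⋃ i ∈ Finset.range j, U i

/-- `W` is the maximum-cardinality densest subset of `M`. -/
def IsMaxDensest (M : Matroid α) (W : Set α) : Prop :=
  W ⊆ M.E ∧ (∀ X ⊆ M.E, dens M X ≤ dens M W) ∧
    ∀ X ⊆ M.E, dens M X = dens M W → X.encard ≤ W.encard

/-- `U 0, …, U (k-1)` is the greedy density-based decomposition of the ground set of `M'`. -/
structure IsDensityDecomp (M' : Matroid α) (k : ℕ) (U : ℕ → Set α) : Prop where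
  cover : pre U k = M'.E
  densest : ∀ j < k, IsMaxDensest (contract M' (pre U j)) (U j)

open Classical in
/-- Associated density of an element `v` with respect to the decomposition `U` of `V'`. -/
noncomputable def assocDens (M : Matroid α) (V' : Set α) (k : ℕ) (U : ℕ → Set α) (v : α) :
    ℝ≥0∞ :=
  if h : ∃ j, j < k ∧ v ∈ M.closure (pre U (j + 1)) then
    dens (contract (M ↾ V') (pre U (Nat.find h))) (U (Nat.find h))
  else 0

/-- Size of a maximum common independent set within `S`. -/
noncomputable def mu (M₁ M₂ : Matroid α) (S : Set α) : ℕ∞ :=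
  ⨆ I ∈ {I : Set α | I ⊆ S ∧ M₁.Indep I ∧ M₂.Indep I}, I.encard


/- ## auxiliary lemmas -/

variable {M : Matroid α} {C D X Y I J W : Set α} {v : α}

lemma le_er (hI : M.Indep I) (hIX : I ⊆ X) : I.encard ≤ er M X :=
  le_iSup₂ (f := fun I (_ : I ∈ {I : Set α | M.Indep I ∧ I ⊆ X}) => I.encard) I ⟨hI, hIX⟩

lemma er_le {c : ℕ∞} (h : ∀ I, M.Indep I → I ⊆ X → I.encard ≤ c) : er M X ≤ c :=
  iSup₂_le fun I hI => h I hI.1 hI.2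

lemma er_le_encard : er M X ≤ X.encard := er_le fun _ _ h => encard_mono h

lemma er_mono (h : X ⊆ Y) : er M X ≤ er M Y :=
  er_le fun _ hI hIX => le_er hI (hIX.trans h)

lemma er_basis (hI : M.IsBasis I X) : er M X = I.encard := by
  refine le_antisymm (er_le fun J hJ hJX => ?_) (le_er hI.indep hI.subset)
  obtain ⟨J', hJ', hJJ'⟩ := hJ.subset_isBasis_of_subset hJX hI.subset_ground
  exact (encard_mono hJJ').trans (hJ'.encard_eq_encard hI).le

lemma er_indep_singleton (h : M.Indep {v}) : er M {v} = 1 := by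
  rw [er_basis h.isBasis_self, encard_singleton]

@[simp] lemma contract_ground : (contract M C).E = M.E \ C := rfl

lemma contract_empty : contract M ∅ = M := by
  rw [contract, diff_empty, ← dual_ground, restrict_ground_eq_self, dual_dual]

lemma contract_contract : contract (contract M C) D = contract M (C ∪ D) := by
  have h1 : (contract M C)✶ = M✶ ↾ (M.E \ C) := by rw [contract, dual_dual]
  show ((contract M C)✶ ↾ ((contract M C).E \ D))✶ = _
  rw [h1, contract_ground,
    restrict_restrict_eq _ (show (M.E \ C) \ D ⊆ M.E \ C from diff_subset),
    diff_diff, contract]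

lemma contract_indep_of (hJ : M.IsBasis J C) (hI : M.Indep (I ∪ J))
    (hIE : I ⊆ M.E \ C) : (contract M C).Indep I := by
  obtain ⟨B, hB, hUB⟩ := hI.exists_isBase_superset
  have hJB : J = B ∩ C :=
    hJ.eq_of_subset_indep (hB.indep.subset inter_subset_left)
      (subset_inter (subset_union_right.trans hUB) hJ.subset) inter_subset_right
  have hbas : M✶.IsBasis ((M.E \ B) ∩ (M.E \ C)) (M.E \ C) :=
    hB.compl_inter_isBasis_of_inter_isBasis (hJB ▸ hJ)
  rw [contract, dual_indep_iff_exists']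
  refine ⟨hIE, (M.E \ B) ∩ (M.E \ C), ?_, ?_⟩
  · exact (isBase_restrict_iff (by exact diff_subset)).2 hbas
  · exact ((disjoint_sdiff_right (s := B) (t := M.E)).mono_left
      (subset_union_left.trans hUB)).mono_right inter_subset_left

lemma exists_basis_of_contract_indep (hC : C ⊆ M.E) (hI : (contract M C).Indep I) :
    ∃ J, M.IsBasis J C ∧ Disjoint I J ∧ M.Indep (I ∪ J) := by
  rw [contract, dual_indep_iff_exists'] at hI
  obtain ⟨hIR, B, hB, hdj⟩ := hI
  rw [isBase_restrict_iff (by exact diff_subset)] at hB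
  obtain ⟨B', hB', hBeq⟩ := hB.exists_isBase
  have hbas := hB'.compl_inter_isBasis_of_inter_isBasis (hBeq ▸ hB)
  rw [dual_dual, dual_ground, diff_diff_cancel_left hC] at hbas
  have hIB' : I ⊆ M.E \ B' := by
    intro x hx
    refine ⟨(hIR hx).1, fun hxB' => ?_⟩
    exact hdj.ne_of_mem hx (hBeq ▸ ⟨hxB', hIR hx⟩) rfl
  refine ⟨(M.E \ B') ∩ C, hbas, ?_, ?_⟩
  · exact (disjoint_sdiff_left (s := C) (t := M.E)).mono hIR inter_subset_right
  · exact (hB'.compl_isBase_of_dual).indep.subset (union_subset hIB' inter_subset_left)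

lemma er_contract_add (hC : C ⊆ M.E) (hX : X ⊆ M.E \ C) :
    er M (X ∪ C) = er (contract M C) X + er M C := by
  obtain ⟨I, hI⟩ := (contract M C).exists_isBasis X (by rw [contract_ground]; exact hX)
  obtain ⟨J, hJ, hdj, hIJ⟩ := exists_basis_of_contract_indep hC hI.indep
  have hXE : X ∪ C ⊆ M.E := union_subset (hX.trans diff_subset) hC
  have hIX : I ⊆ X := hI.subset
  have hbasis : M.IsBasis (I ∪ J) (X ∪ C) := by
    rw [isBasis_iff hXE]
    refine ⟨hIJ, union_subset_union hIX hJ.subset, fun K hK hIJK hKX => ?_⟩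
    refine subset_antisymm hIJK fun x hxK => ?_
    rcases hKX hxK with hxX | hxC
    · by_cases hxI : x ∈ I
      · exact Or.inl hxI
      left
      have hins : (contract M C).Indep (insert x I) := by
        refine contract_indep_of hJ (hK.subset ?_) ?_
        · rw [insert_union]
          exact insert_subset hxK hIJK
        · exact insert_subset (hX hxX) (hIX.trans hX)
      rw [hI.eq_of_subset_indep hins (subset_insert _ _) (insert_subset hxX hIX)]
      exact mem_insert _ _
    · right
      have : J = K ∩ C :=
        hJ.eq_of_subset_indep (hK.subset inter_subset_left)
          (subset_inter (subset_union_right.trans hIJK) hJ.subset) inter_subset_right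
      rw [this]; exact ⟨hxK, hxC⟩
  rw [er_basis hbasis, er_basis hI, er_basis hJ, encard_union_eq hdj]

/- cast helpers -/

lemma cast_ne_top {x : ℕ∞} (h : x ≠ ⊤) : (x : ℝ≥0∞) ≠ ⊤ := by
  intro h'
  exact h (top_le_iff.1 (ENat.toENNReal_le.1 (by rw [ENat.toENNReal_top, h'])))

lemma one_le_cast {x : ℕ∞} (h : 1 ≤ x) : 1 ≤ (x : ℝ≥0∞) := by
  rw [← ENat.toENNReal_one]; exact ENat.toENNReal_le.2 h

lemma cast_ne_zero_of_one_le {x : ℕ∞} (h : 1 ≤ x) : (x : ℝ≥0∞) ≠ 0 :=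
  ne_of_gt (lt_of_lt_of_le zero_lt_one (one_le_cast h))

/- no loops after contracting a max densest set -/

lemma noloop_contract_densest (hfin : M.E.Finite) (hW : IsMaxDensest M W)
    (hM : ∀ v ∈ M.E, 1 ≤ er M {v}) :
    ∀ v ∈ (contract M W).E, 1 ≤ er (contract M W) {v} := by
  intro v hv
  by_contra hlt
  have h0 : er (contract M W) {v} = 0 := by
    rwa [ENat.one_le_iff_ne_zero, not_ne_iff] at hlt
  rcases W.eq_empty_or_nonempty with hWe | ⟨w, hw⟩
  · rw [hWe, contract_empty] at h0 hv
    have := hM v hv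
    rw [h0] at this
    exact absurd this (by simp)
  have hvE : v ∈ M.E ∧ v ∉ W := by rwa [contract_ground] at hv
  have hr1 : 1 ≤ er M W := (hM w (hW.1 hw)).trans (er_mono (singleton_subset_iff.2 hw))
  have hins : er M (insert v W) = er M W := by
    have h := er_contract_add hW.1 (X := {v}) (singleton_subset_iff.2 ⟨hvE.1, hvE.2⟩)
    rw [singleton_union, h0, zero_add] at h
    exact h
  have hle := hW.2.1 (insert v W) (insert_subset hvE.1 hW.1)
  rw [dens, dens, hins, encard_insert_of_notMem hvE.2, ENat.toENNReal_add,
    ENat.toENNReal_one] at hle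
  set a : ℝ≥0∞ := (W.encard : ℝ≥0∞) with ha_def
  set r : ℝ≥0∞ := (er M W : ℝ≥0∞) with hr_def
  have ha : a ≠ ⊤ := cast_ne_top (hfin.subset hW.1).encard_lt_top.ne
  have hrt : r ≠ ⊤ := cast_ne_top ((er_le_encard.trans_lt (hfin.subset hW.1).encard_lt_top).ne)
  have hr0 : r ≠ 0 := cast_ne_zero_of_one_le hr1
  rw [ENNReal.div_le_iff hr0 hrt, ENNReal.div_mul_cancel hr0 hrt] at hle
  exact absurd hle (not_le.2 (ENNReal.lt_add_right ha one_ne_zero))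

/- pre lemmas -/

lemma pre_zero (U : ℕ → Set α) : pre U 0 = ∅ := by simp [pre]

lemma pre_succ (U : ℕ → Set α) (j : ℕ) : pre U (j + 1) = pre U j ∪ U j := by
  rw [pre, pre, Finset.range_add_one, Finset.set_biUnion_insert, union_comm]

lemma pre_mono (U : ℕ → Set α) {i j : ℕ} (h : i ≤ j) : pre U i ⊆ pre U j := by
  intro x hx
  simp only [pre, mem_iUnion, Finset.mem_range, exists_prop] at hx ⊢
  obtain ⟨a, ha, hxa⟩ := hx
  exact ⟨a, lt_of_lt_of_le ha h, hxa⟩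


lemma noloop_all {M' : Matroid α} [M'.Finite] (hM : Loopless M') {k : ℕ} {U : ℕ → Set α}
    (hdec : IsDensityDecomp M' k U) :
    ∀ j ≤ k, ∀ v ∈ (contract M' (pre U j)).E, 1 ≤ er (contract M' (pre U j)) {v} := by
  intro j
  induction j with
  | zero =>
    intro _ v hv
    rw [pre_zero, contract_empty] at hv ⊢
    rw [er_indep_singleton (hM v hv)]
  | succ n ih =>
    intro hnk v hv
    have hn := ih (Nat.le_of_succ_le hnk)
    rw [pre_succ, ← contract_contract] at hv ⊢
    have hfin : (contract M' (pre U n)).E.Finite := by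
      rw [contract_ground]; exact M'.ground_finite.subset diff_subset
    exact noloop_contract_densest hfin (hdec.densest n hnk) hn v hv


/-- in the density-based decomposition, densities are non-increasing, and
strictly decreasing while positive. -/
theorem densityDecomp_dens_antitone (M' : Matroid α) [M'.Finite] (hM : Loopless M')
    (k : ℕ) (hk : er M' M'.E = (k : ℕ∞))
    (U : ℕ → Set α) (hdec : IsDensityDecomp M' k U) (j : ℕ) (hj : j + 1 < k) :
    dens (contract M' (pre U (j + 1))) (U (j + 1)) ≤ dens (contract M' (pre U j)) (U j) ∧
      (0 < dens (contract M' (pre U j)) (U j) →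
        dens (contract M' (pre U (j + 1))) (U (j + 1)) <
          dens (contract M' (pre U j)) (U j)) := by
  set M₁ := contract M' (pre U j) with hM₁
  set M₂ := contract M' (pre U (j + 1)) with hM₂def
  have hM₂ : M₂ = contract M₁ (U j) := by
    rw [hM₂def, hM₁, contract_contract, ← pre_succ]
  have hA := hdec.densest j (Nat.lt_of_succ_lt hj)
  have hB := hdec.densest (j + 1) hj
  rcases (U (j + 1)).eq_empty_or_nonempty with hBe | hBne
  · have h0 : dens M₂ (U (j + 1)) = 0 := by
      rw [hBe, dens, encard_empty, ENat.toENNReal_zero, ENNReal.zero_div]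
    rw [h0]
    exact ⟨zero_le, fun h => h⟩
  -- nonempty case
  have noloop₁ := noloop_all hM hdec j (Nat.le_of_succ_le (Nat.le_of_lt hj))
  have noloop₂ := noloop_all hM hdec (j + 1) (Nat.le_of_lt hj)
  have hBE : U (j + 1) ⊆ M₂.E := hB.1
  have hAE : U j ⊆ M₁.E := hA.1
  have hBE₁ : U (j + 1) ⊆ M₁.E \ U j := by
    rw [← contract_ground (M := M₁) (C := U j), ← hM₂]; exact hBE
  obtain ⟨v, hv⟩ := hBne
  -- U j is nonempty
  have hAne : (U j).Nonempty := by
    by_contra hAe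
    rw [not_nonempty_iff_eq_empty] at hAe
    have hv1 : v ∈ M₁.E := (hBE₁ hv).1
    have hd1 : dens M₁ {v} = 1 := by
      have h1 : er M₁ {v} = 1 := le_antisymm (le_trans er_le_encard (by simp))
        (noloop₁ v hv1)
      rw [dens, h1, encard_singleton, ENat.toENNReal_one]
      exact div_one 1
    have := hA.2.1 {v} (singleton_subset_iff.2 hv1)
    rw [hd1, hAe, dens, encard_empty, ENat.toENNReal_zero, ENNReal.zero_div] at this
    simp at this
  obtain ⟨w, hw⟩ := hAne
  have hfin₁ : M₁.E.Finite := by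
    rw [hM₁, contract_ground]; exact M'.ground_finite.subset diff_subset
  set a : ℝ≥0∞ := ((U j).encard : ℝ≥0∞) with ha_def
  set r : ℝ≥0∞ := (er M₁ (U j) : ℝ≥0∞) with hr_def
  set b : ℝ≥0∞ := ((U (j + 1)).encard : ℝ≥0∞) with hb_def
  set s : ℝ≥0∞ := (er M₂ (U (j + 1)) : ℝ≥0∞) with hs_def
  have hAfin : (U j).Finite := hfin₁.subset hAE
  have hBfin : (U (j + 1)).Finite := (hfin₁.subset (hBE₁.trans diff_subset))
  have ha : a ≠ ⊤ := cast_ne_top hAfin.encard_lt_top.ne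
  have hb : b ≠ ⊤ := cast_ne_top hBfin.encard_lt_top.ne
  have hrt : r ≠ ⊤ := cast_ne_top (er_le_encard.trans_lt hAfin.encard_lt_top).ne
  have hst : s ≠ ⊤ := cast_ne_top (er_le_encard.trans_lt hBfin.encard_lt_top).ne
  have hr0 : r ≠ 0 := cast_ne_zero_of_one_le
    ((noloop₁ w (hAE hw)).trans (er_mono (singleton_subset_iff.2 hw)))
  have hs0 : s ≠ 0 := cast_ne_zero_of_one_le
    ((noloop₂ v (hBE hv)).trans (er_mono (singleton_subset_iff.2 hv)))
  have hb0 : b ≠ 0 := cast_ne_zero_of_one_le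
    (ENat.one_le_iff_ne_zero.2 (encard_ne_zero.2 ⟨v, hv⟩))
  have hrs0 : r + s ≠ 0 := fun h => hr0 (by simpa using (add_eq_zero.1 h).1)
  have hrst : r + s ≠ ⊤ := ENNReal.add_ne_top.2 ⟨hrt, hst⟩
  have hdj : Disjoint (U (j + 1)) (U j) :=
    (disjoint_sdiff_left (s := U j) (t := M₁.E)).mono_left hBE₁
  have hrank : er M₁ (U (j + 1) ∪ U j) = er M₂ (U (j + 1)) + er M₁ (U j) := by
    rw [hM₂]
    exact er_contract_add hAE hBE₁
  have hcard : (U (j + 1) ∪ U j).encard = (U (j + 1)).encard + (U j).encard :=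
    encard_union_eq hdj
  have hunion : U (j + 1) ∪ U j ⊆ M₁.E := union_subset (hBE₁.trans diff_subset) hAE
  have hdU : dens M₁ (U (j + 1) ∪ U j) = (b + a) / (s + r) := by
    rw [dens, hcard, hrank, ENat.toENNReal_add, ENat.toENNReal_add]
  have hmed : (a + b) / (r + s) ≤ a / r := by
    have := hA.2.1 (U (j + 1) ∪ U j) hunion
    rw [hdU] at this
    rwa [add_comm b a, add_comm s r] at this
  have key : b / s ≤ a / r := by
    rw [ENNReal.div_le_iff hrs0 hrst, mul_add, ENNReal.div_mul_cancel hr0 hrt] at hmed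
    have h2 : b ≤ a / r * s := (ENNReal.add_le_add_iff_left ha).1 hmed
    exact (ENNReal.div_le_iff hs0 hst).2 h2
  refine ⟨key, fun _ => ?_⟩
  rw [lt_iff_le_and_ne]
  refine ⟨key, fun heq => ?_⟩
  -- equality case: contradiction with max cardinality
  have hcross : r * b = s * a := (ENNReal.div_eq_div_iff hr0 hrt hs0 hst).1 heq
  have hmeq : dens M₁ (U (j + 1) ∪ U j) = dens M₁ (U j) := by
    rw [hdU, add_comm b a, add_comm s r]
    show (a + b) / (r + s) = a / r
    rw [ENNReal.div_eq_div_iff hr0 hrt hrs0 hrst, mul_add, add_mul, hcross]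
  have hle := hA.2.2 (U (j + 1) ∪ U j) hunion hmeq
  rw [hcard] at hle
  have hle' : b + a ≤ a := by
    rw [← ENat.toENNReal_add] at *
    exact ENat.toENNReal_le.2 hle
  have : a < b + a := by rw [add_comm]; exact ENNReal.lt_add_right ha hb0
  exact absurd hle' (not_le.2 this)


end MatroidDCS
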